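/- Fix an integer n ≥ 1, a real constant Λ, and a real number K ≠ 0. Let F : ℝ³ → ℝ³ be the vector field F(x, y, z) = ((1/2)x(y² + z² − x²), (1/2)y(z² + x² − y²), (1/2)n·z(x² + y² − z² − (2Λ/n)x²y²)). Then F is differentiable at (K, K, 0), and the characteristic polynomial of its total derivative there is X(X + 2K²)(X − (nK² − ΛK⁴)). In particular, if Λ ≤ 0 the derivative has one positive eigenvalue nK² − ΛK⁴, one zero eigenvalue, and one negative eigenvalue −2K². -/

import Mathlib

/-!
At `(K, K, 0)` the Jacobian of the field is block diagonal: on the `(x, y)`-plane it is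
`K² · [[-1, 1], [1, -1]]`, with eigenvalues `0` (along `(1, 1)`) and `-2K²` (along `(1, -1)`),
while every entry of the last row and column except `∂F₃/∂z` carries a factor `z` and vanishes,
leaving `∂F₃/∂z = nK² − ΛK⁴`. The eigenvalues are then the roots of the characteristic polynomial.
-/

open Polynomial

noncomputable def reducedKEField (n : ℕ) (Λ : ℝ) (p : Fin 3 → ℝ) : Fin 3 → ℝ :=
  ![(1/2) * p 0 * (p 1 ^ 2 + p 2 ^ 2 - p 0 ^ 2),
    (1/2) * p 1 * (p 2 ^ 2 + p 0 ^ 2 - p 1 ^ 2),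
    (1/2) * (n : ℝ) * p 2 *
      (p 0 ^ 2 + p 1 ^ 2 - p 2 ^ 2 - (2 * Λ / (n : ℝ)) * p 0 ^ 2 * p 1 ^ 2)]

noncomputable def reducedKEJacobian (n : ℕ) (Λ : ℝ) (p : Fin 3 → ℝ) :
    Matrix (Fin 3) (Fin 3) ℝ :=
  let x := p 0; let y := p 1; let z := p 2
  !![(1/2) * (y ^ 2 + z ^ 2 - 3 * x ^ 2), x * y, x * z;
     x * y, (1/2) * (z ^ 2 + x ^ 2 - 3 * y ^ 2), y * z;
     n * x * z * (1 - (2 * Λ / n) * y ^ 2), n * y * z * (1 - (2 * Λ / n) * x ^ 2),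
       (n / 2) * (x ^ 2 + y ^ 2 - 3 * z ^ 2 - (2 * Λ / n) * x ^ 2 * y ^ 2)]

theorem hasFDerivAt_reducedKEField (n : ℕ) (Λ : ℝ) (p : Fin 3 → ℝ) :
    HasFDerivAt (reducedKEField n Λ)
      (Matrix.toLin' (reducedKEJacobian n Λ p)).toContinuousLinearMap p := by
  have hx := hasFDerivAt_apply (𝕜 := ℝ) (0 : Fin 3) p
  have hy := hasFDerivAt_apply (𝕜 := ℝ) (1 : Fin 3) p
  have hz := hasFDerivAt_apply (𝕜 := ℝ) (2 : Fin 3) p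
  refine hasFDerivAt_pi'' fun i => ?_
  fin_cases i <;>
    [refine ((hx.const_mul _).mul (((hy.pow 2).add (hz.pow 2)).sub (hx.pow 2))).congr_fderiv ?_;
     refine ((hy.const_mul _).mul (((hz.pow 2).add (hx.pow 2)).sub (hy.pow 2))).congr_fderiv ?_;
     refine ((hz.const_mul _).mul ((((hx.pow 2).add (hy.pow 2)).sub (hz.pow 2)).sub
       (((hx.pow 2).const_mul _).mul (hy.pow 2)))).congr_fderiv ?_] <;>
  · ext v
    simp only [Fin.isValue, Fin.zero_eta, Fin.mk_one, Fin.reduceFinMk, Nat.add_one_sub_one,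
      pow_one, nsmul_eq_mul, Nat.cast_ofNat, Pi.sub_apply, Pi.add_apply, Pi.mul_apply,
      add_apply, smul_apply, sub_apply, ContinuousLinearMap.proj_apply, smul_eq_mul,
      ContinuousLinearMap.comp_apply, LinearMap.coe_toContinuousLinearMap', Matrix.toLin'_apply,
      reducedKEJacobian, Matrix.cons_mulVec, Matrix.empty_mulVec, dotProduct, Fin.sum_univ_three,
      Matrix.cons_val_zero, Matrix.cons_val_one, Matrix.cons_val]
    ring

theorem reducedKEJacobian_KK0 (n : ℕ) (hn : n ≠ 0) (Λ K : ℝ) :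
    reducedKEJacobian n Λ ![K, K, 0] =
      !![-K ^ 2, K ^ 2, 0; K ^ 2, -K ^ 2, 0; 0, 0, n * K ^ 2 - Λ * K ^ 4] := by
  ext i j
  fin_cases i <;> fin_cases j <;> simp [reducedKEJacobian] <;> field_simp <;> ring

theorem charpoly_blockDiag_fin_three {R : Type*} [CommRing R] (a c : R) :
    (!![-a, a, 0; a, -a, 0; 0, 0, c] : Matrix (Fin 3) (Fin 3) R).charpoly
      = X * (X + C (2 * a)) * (X - C c) := by
  rw [Matrix.charpoly, Matrix.det_fin_three]
  simp only [Matrix.charmatrix_apply_eq, Matrix.charmatrix_apply_ne, ne_eq, Fin.reduceEq,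
    not_false_eq_true, Matrix.of_apply, Matrix.cons_val', Matrix.cons_val_zero, Matrix.cons_val_one,
    Matrix.cons_val, Matrix.cons_val_fin_one, map_neg, map_zero, map_mul, map_ofNat]
  ring

open Polynomial in
theorem linearisation_at_KK0
    (n : ℕ) (hn : 1 ≤ n) (Λ K : ℝ) (hK : K ≠ 0)
    (F : (Fin 3 → ℝ) → (Fin 3 → ℝ))
    (hF : ∀ p : Fin 3 → ℝ, F p =
      ![(1/2) * p 0 * (p 1 ^ 2 + p 2 ^ 2 - p 0 ^ 2),
        (1/2) * p 1 * (p 2 ^ 2 + p 0 ^ 2 - p 1 ^ 2),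
        (1/2) * (n : ℝ) * p 2 *
          (p 0 ^ 2 + p 1 ^ 2 - p 2 ^ 2 - (2 * Λ / (n : ℝ)) * p 0 ^ 2 * p 1 ^ 2)]) :
    DifferentiableAt ℝ F ![K, K, 0] ∧
    LinearMap.charpoly (fderiv ℝ F ![K, K, 0]).toLinearMap
      = X * (X + C (2 * K ^ 2)) * (X - C ((n : ℝ) * K ^ 2 - Λ * K ^ 4)) ∧
    (Λ ≤ 0 →
      Module.End.HasEigenvalue (fderiv ℝ F ![K, K, 0]).toLinearMap
        ((n : ℝ) * K ^ 2 - Λ * K ^ 4) ∧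
      0 < (n : ℝ) * K ^ 2 - Λ * K ^ 4 ∧
      Module.End.HasEigenvalue (fderiv ℝ F ![K, K, 0]).toLinearMap (0 : ℝ) ∧
      Module.End.HasEigenvalue (fderiv ℝ F ![K, K, 0]).toLinearMap (-(2 * K ^ 2)) ∧
      -(2 * K ^ 2) < 0) := by
  obtain rfl : F = reducedKEField n Λ := funext hF
  have hderiv := hasFDerivAt_reducedKEField n Λ ![K, K, 0]
  rw [reducedKEJacobian_KK0 n (by omega)] at hderiv
  have hcharpoly : LinearMap.charpoly (fderiv ℝ (reducedKEField n Λ) ![K, K, 0]).toLinearMap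
      = X * (X + C (2 * K ^ 2)) * (X - C ((n : ℝ) * K ^ 2 - Λ * K ^ 4)) := by
    rw [hderiv.fderiv, LinearMap.coe_toContinuousLinearMap, Matrix.charpoly_toLin',
      charpoly_blockDiag_fin_three]
  have hasEigenvalue_of_root (μ : ℝ)
      (hμ : μ = 0 ∨ μ = -(2 * K ^ 2) ∨ μ = (n : ℝ) * K ^ 2 - Λ * K ^ 4) :
      Module.End.HasEigenvalue (fderiv ℝ (reducedKEField n Λ) ![K, K, 0]).toLinearMap μ := by
    rw [Module.End.hasEigenvalue_iff_isRoot_charpoly, hcharpoly]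
    rcases hμ with rfl | rfl | rfl <;> simp
  refine ⟨hderiv.differentiableAt, hcharpoly, fun hΛ => ?_⟩
  have hK2 : 0 < K ^ 2 := by positivity
  have hnK2 : 0 < (n : ℝ) * K ^ 2 := mul_pos (by exact_mod_cast hn) hK2
  have hΛK4 : 0 ≤ -Λ * K ^ 4 := mul_nonneg (neg_nonneg.2 hΛ) (by positivity)
  exact ⟨hasEigenvalue_of_root _ (by simp), by linarith, hasEigenvalue_of_root _ (by simp),
    hasEigenvalue_of_root _ (by simp), by linarith⟩
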